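/- Let α, β ∈ ℝ with β ≠ 0 and α/β irrational. Define on the flat torus T = (ℝ/2πℤ)² the function G(x,y) = cos x + cos y and for p = (x,y) the observation curve g_p(t) = cos(x + αt) + cos(y + βt). If p ≠ q in T then g_p ≠ g_q as functions of t. -/

import Mathlib

/-! Along the flow, `t ↦ cos (θ + c t)` obeys d'Alembert's relation
`f (t + s) + f (t - s) = 2 cos (c s) f t`. If `g_p = g_q`, the `x`-part of the difference
`g_p - g_q` equals minus its `y`-part, so it obeys the relation both with frequency `α` and with
frequency `β`; choosing `s = π / β` makes `cos (α s) ≠ cos (β s)` (otherwise `α / β` would be an odd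
integer), which forces both parts to vanish identically. A single cosine wave of nonzero frequency
determines its phase, so `p = q`. -/

namespace Real.Angle

theorem cos_add_coe_mul_add_add_cos_add_coe_mul_sub (θ : Angle) (c t s : ℝ) :
    cos (θ + ↑(c * (t + s))) + cos (θ + ↑(c * (t - s))) =
      2 * Real.cos (c * s) * cos (θ + ↑(c * t)) := by
  induction θ using Real.Angle.induction_on with
  | h x =>
    simp only [← coe_add, cos_coe, mul_add, mul_sub, ← add_assoc, ← add_sub_assoc,
      Real.cos_add, Real.cos_sub]
    ring

theorem eq_of_forall_cos_add_coe_mul_eq {θ ψ : Angle} {c : ℝ} (hc : c ≠ 0)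
    (h : ∀ t : ℝ, cos (θ + ↑(c * t)) = cos (ψ + ↑(c * t))) : θ = ψ := by
  have hcos := h 0
  have hsin := h (π / 2 / c)
  rw [mul_div_cancel₀ _ hc, cos_add_pi_div_two, cos_add_pi_div_two, neg_inj] at hsin
  induction θ using Real.Angle.induction_on with
  | h x =>
    induction ψ using Real.Angle.induction_on with
    | h y =>
      simp only [mul_zero, coe_zero, add_zero, cos_coe, sin_coe] at hcos hsin
      exact cos_sin_inj hcos hsin

theorem cos_add_coe_mul_eq_of_sub_eq_sub {θ₁ θ₂ ψ₁ ψ₂ : Angle} {α β s : ℝ}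
    (hs : Real.cos (α * s) ≠ Real.cos (β * s))
    (h : ∀ t : ℝ, cos (θ₁ + ↑(α * t)) - cos (θ₂ + ↑(α * t)) =
      cos (ψ₁ + ↑(β * t)) - cos (ψ₂ + ↑(β * t)))
    (t : ℝ) : cos (θ₁ + ↑(α * t)) = cos (θ₂ + ↑(α * t)) := by
  have hsep : (Real.cos (α * s) - Real.cos (β * s)) *
      (cos (θ₁ + ↑(α * t)) - cos (θ₂ + ↑(α * t))) = 0 := by
    linear_combination (1 / 2 : ℝ) * (h (t + s) + h (t - s)) - Real.cos (β * s) * h t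
      - (1 / 2 : ℝ) * (cos_add_coe_mul_add_add_cos_add_coe_mul_sub θ₁ α t s
        - cos_add_coe_mul_add_add_cos_add_coe_mul_sub θ₂ α t s
        - cos_add_coe_mul_add_add_cos_add_coe_mul_sub ψ₁ β t s
        + cos_add_coe_mul_add_add_cos_add_coe_mul_sub ψ₂ β t s)
  exact sub_eq_zero.mp ((mul_eq_zero.mp hsep).resolve_left (sub_ne_zero.mpr hs))

end Real.Angle

open Real

theorem exists_cos_mul_ne_cos_mul {α β : ℝ} (hβ : β ≠ 0) (hirr : Irrational (α / β)) :
    ∃ s : ℝ, Real.cos (α * s) ≠ Real.cos (β * s) := by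
  refine ⟨π / β, fun h => ?_⟩
  rw [mul_div_cancel₀ _ hβ, Real.cos_pi, Real.cos_eq_neg_one_iff] at h
  obtain ⟨k, hk⟩ := h
  refine hirr ⟨2 * k + 1, ?_⟩
  rw [eq_div_iff hβ]
  push_cast
  apply mul_left_cancel₀ pi_ne_zero
  calc π * ((2 * k + 1) * β) = (π + k * (2 * π)) * β := by ring
    _ = α * (π / β) * β := by rw [hk]
    _ = π * α := by field_simp

/-- On the flat torus with irrational winding, distinct points have distinct
observation curves for `G(x,y) = cos x + cos y`. -/
theorem stmt_4 (α β : ℝ) (hβ : β ≠ 0) (hirr : Irrational (α / β))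
    (p q : Real.Angle × Real.Angle) (hpq : p ≠ q) :
    (fun t : ℝ => Real.Angle.cos (p.1 + (α * t : ℝ)) + Real.Angle.cos (p.2 + (β * t : ℝ))) ≠
    (fun t : ℝ => Real.Angle.cos (q.1 + (α * t : ℝ)) + Real.Angle.cos (q.2 + (β * t : ℝ))) := by
  intro h
  obtain ⟨s, hs⟩ := exists_cos_mul_ne_cos_mul hβ hirr
  have hα : α ≠ 0 := (div_ne_zero_iff.mp hirr.ne_zero).1
  have hdiff : ∀ t : ℝ,
      Angle.cos (p.1 + ↑(α * t)) - Angle.cos (q.1 + ↑(α * t)) =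
        Angle.cos (q.2 + ↑(β * t)) - Angle.cos (p.2 + ↑(β * t)) := fun t => by
    linear_combination congrFun h t
  have h₁ := Angle.cos_add_coe_mul_eq_of_sub_eq_sub hs hdiff
  have h₂ : ∀ t : ℝ, Angle.cos (p.2 + ↑(β * t)) = Angle.cos (q.2 + ↑(β * t)) := fun t => by
    linear_combination hdiff t - h₁ t
  exact hpq (Prod.ext (Angle.eq_of_forall_cos_add_coe_mul_eq hα h₁)
    (Angle.eq_of_forall_cos_add_coe_mul_eq hβ h₂))
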